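/- arXiv:2110.00049 — 2 statements merged into one kernel-verified Lean document; each statement's English description precedes it below -/
import Mathlib

section
/- Let G be a topological group, S an arbitrary subset of G, and n a positive integer. Then the set {x ∈ G : the set of S-conjugates x^S = {s⁻¹xs : s ∈ S} has at most n elements} is closed in G, provided G is Hausdorff. -/
/-!
The `S`-conjugacy class of `x` is the range of the family `s ↦ s⁻¹ x s`, `s ∈ S`, of continuous
functions of `x`. Such a range has at most `n` points iff any `n + 1` members of the family
agree at two indices, so the set in question is an intersection, over all `(n + 1)`-tuples of
indices, of finite unions of equalizers of continuous maps into a Hausdorff space.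
-/

open Set Function Cardinal

universe u v

theorem Set.natCast_le_encard_range_iff {ι : Type u} {α : Type v} (f : ι → α) (m : ℕ) :
    (m : ℕ∞) ≤ (range f).encard ↔ ∃ t : Fin m → ι, Injective (f ∘ t) := by
  rw [← toENat_cardinalMk, natCast_le_toENat, ← lift_mk_fin.{v}, ← lift_uzero #(range f),
    lift_mk_le']
  constructor
  · rintro ⟨e⟩
    refine ⟨rangeSplitting f ∘ e, ?_⟩
    rw [← comp_assoc, comp_rangeSplitting]
    exact Subtype.val_injective.comp e.injective
  · rintro ⟨t, ht⟩
    exact ⟨⟨rangeFactorization f ∘ t, .of_comp (f := Subtype.val) ht⟩⟩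

theorem isClosed_setOf_not_injective {X Y ι : Type*} [TopologicalSpace X] [TopologicalSpace Y]
    [T2Space Y] [Finite ι] {g : ι → X → Y} (hg : ∀ i, Continuous (g i)) :
    IsClosed {x | ¬ Injective fun i => g i x} := by
  have : {x | ¬ Injective fun i => g i x} = ⋃ (i) (j) (_ : i ≠ j), {x | g i x = g j x} := by
    ext x
    simp only [mem_ofPred_eq, not_injective_iff, mem_iUnion, exists_prop]
    grind
  rw [this]
  exact isClosed_iUnion_of_finite fun i => isClosed_iUnion_of_finite fun j =>
    isClosed_iUnion_of_finite fun _ => isClosed_eq (hg i) (hg j)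

theorem isClosed_setOf_encard_range_le {X Y ι : Type*} [TopologicalSpace X] [TopologicalSpace Y]
    [T2Space Y] {φ : ι → X → Y} (hφ : ∀ i, Continuous (φ i)) (n : ℕ) :
    IsClosed {x | (range fun i => φ i x).encard ≤ n} := by
  have : {x | (range fun i => φ i x).encard ≤ n} =
      ⋂ t : Fin (n + 1) → ι, {x | ¬ Injective fun k => φ (t k) x} := by
    ext x
    rw [mem_ofPred_eq, ← not_lt, ← ENat.add_one_le_iff (ENat.natCast_ne_top n), ← Nat.cast_succ,
      natCast_le_encard_range_iff]
    simp [comp_def]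
  rw [this]
  exact isClosed_iInter fun t => isClosed_setOf_not_injective fun k => hφ (t k)

theorem stmt4_general {G : Type*} [Group G] [TopologicalSpace G] [IsTopologicalGroup G]
    [T2Space G] (S : Set G) (n : ℕ) :
    IsClosed {x : G | {y : G | ∃ s ∈ S, s⁻¹ * x * s = y}.Finite ∧
      {y : G | ∃ s ∈ S, s⁻¹ * x * s = y}.ncard ≤ n} := by
  have hconj (x : G) :
      {y : G | ∃ s ∈ S, s⁻¹ * x * s = y} = range fun s : S => (s : G)⁻¹ * x * s := by
    ext; simp
  simp_rw [hconj, ← encard_le_coe_iff_finite_ncard_le]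
  exact isClosed_setOf_encard_range_le (fun s => by fun_prop) n

theorem stmt4 {G : Type*} [Group G] [TopologicalSpace G] [IsTopologicalGroup G]
    [CompactSpace G] [T2Space G] (S : Set G) (n : ℕ) (hn : 0 < n) :
    IsClosed {x : G | {y : G | ∃ s ∈ S, s⁻¹ * x * s = y}.Finite ∧
      {y : G | ∃ s ∈ S, s⁻¹ * x * s = y}.ncard ≤ n} :=
  stmt4_general S n
end

section
/- Let l, n be positive integers and let K be a subgroup of a compact group G such that every conjugacy class of G containing an l-th power x^l with x ∈ K has size at most n. Then Pr(⟨g⟩, G) ≥ 1/(l·n) for every g ∈ K; that is, K is (1/(ln))-central in G. -/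
/-!
Put `x = g ^ l`. The centralizer of `x` has index `|x^G| ≤ n` in `G`, so its Haar measure
is at least `1/n`. The translates `g ^ i • closure ⟨x⟩`, `i < l`, form a closed set
containing `⟨g⟩`, so `closure ⟨x⟩` has index at most `l` in `closure ⟨g⟩` and measure at
least `1/l` there. Every element of `closure ⟨x⟩` commutes with every element of the
centralizer of `x`, so the product of these two sets lies in the commuting set.
-/

open MeasureTheory
open scoped ENNReal

/-- The commuting probability `Pr(K, G)` with respect to the given
(normalized Haar) measures on `K` and `G`. -/
noncomputable def haarCommProb {G : Type*} [Group G] [MeasurableSpace G]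
    (K : Subgroup G) (ν : Measure K) (μ : Measure G) : ℝ≥0∞ :=
  (ν.prod μ) {p : K × G | (p.1 : G) * p.2 = p.2 * (p.1 : G)}

open Subgroup
open scoped Pointwise

theorem conjugatesOf_eq_setOf_inv_mul_mul {G : Type*} [Group G] (x : G) :
    conjugatesOf x = {y | ∃ g : G, g⁻¹ * x * g = y} := by
  ext y
  simp only [conjugatesOf, Set.mem_ofPred_eq, isConj_iff]
  exact ⟨fun ⟨c, hc⟩ => ⟨c⁻¹, by rwa [inv_inv]⟩, fun ⟨c, hc⟩ => ⟨c⁻¹, by rwa [inv_inv]⟩⟩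

theorem Subgroup.index_centralizer_singleton {G : Type*} [Group G] (x : G) :
    (centralizer {x}).index = (conjugatesOf x).ncard := by
  have h := MulAction.index_stabilizer (ConjAct G) x
  rwa [ConjAct.stabilizer_eq_centralizer, ConjAct.orbit_eq_carrier_conjClasses] at h

theorem Subgroup.finiteIndex_centralizer_singleton {G : Type*} [Group G] {x : G}
    (hx : (conjugatesOf x).Finite) : (centralizer {x}).FiniteIndex :=
  ⟨by
    rw [index_centralizer_singleton]
    exact ((Set.ncard_pos hx).mpr ⟨x, mem_conjugatesOf_self⟩).ne'⟩

theorem Subgroup.inv_le_measure_of_index_le {G : Type*} [Group G] [MeasurableSpace G]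
    [MeasurableMul G] (μ : Measure G) [μ.IsMulLeftInvariant] [IsProbabilityMeasure μ]
    (H : Subgroup G) [H.FiniteIndex] (hH : MeasurableSet (H : Set G)) {m : ℕ}
    (hm : H.index ≤ m) : (m : ℝ≥0∞)⁻¹ ≤ μ H := by
  have hμH : μ H = (H.index : ℝ≥0∞)⁻¹ :=
    ENNReal.eq_inv_of_mul_eq_one_left <| by rw [mul_comm, H.index_mul_measure hH, measure_univ]
  rw [hμH, ENNReal.inv_le_inv]
  exact_mod_cast hm

theorem mul_measure_le_haarCommProb {G : Type*} [Group G] [MeasurableSpace G] {K : Subgroup G}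
    (ν : Measure K) (μ : Measure G) [SFinite μ] {A : Set K} {C : Set G}
    (h : ∀ a ∈ A, ∀ c ∈ C, (a : G) * c = c * a) : ν A * μ C ≤ haarCommProb K ν μ := by
  rw [← Measure.prod_prod]
  exact measure_mono fun p hp => h p.1 hp.1 p.2 hp.2

section Topological

variable {G : Type*} [Group G] [TopologicalSpace G] [IsTopologicalGroup G]

theorem Commute.of_mem_topologicalClosure_zpowers [T2Space G] {x a c : G} (hc : Commute x c)
    (ha : a ∈ (zpowers x).topologicalClosure) : Commute a c :=
  mem_centralizer_singleton_iff.mp <| topologicalClosure_minimal _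
    (zpowers_le.mpr (mem_centralizer_singleton_iff.mpr hc)) (Set.isClosed_centralizer _) ha

theorem Subgroup.topologicalClosure_zpowers_subset_iUnion_pow_smul (g : G) {l : ℕ}
    (hl : 0 < l) :
    ((zpowers g).topologicalClosure : Set G) ⊆
      ⋃ i ∈ Finset.range l, g ^ i • ((zpowers (g ^ l)).topologicalClosure : Set G) := by
  refine closure_minimal ?_ (Set.Finite.isClosed_biUnion (Finset.finite_toSet _) fun i _ =>
    (zpowers (g ^ l)).isClosed_topologicalClosure.smul _)
  rintro _ ⟨k, rfl⟩
  have hr : 0 ≤ k % l := Int.emod_nonneg k (by exact_mod_cast hl.ne')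
  have hrl : k % l < l := Int.emod_lt_of_pos k (by exact_mod_cast hl)
  refine Set.mem_biUnion (x := (k % l).toNat) (Finset.mem_range.mpr (by omega))
    ⟨(g ^ l) ^ (k / l), ?_, ?_⟩
  · exact le_topologicalClosure _ (zpow_mem_zpowers _ _)
  · change g ^ (k % l).toNat * _ = g ^ k
    rw [← zpow_natCast, Int.toNat_of_nonneg hr, ← zpow_natCast, ← zpow_mul,
      ← zpow_add, Int.emod_add_mul_ediv]

end Topological

section Haar

variable {G : Type*} [Group G] [TopologicalSpace G] [IsTopologicalGroup G]
  [MeasurableSpace G] [BorelSpace G]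

theorem inv_le_measure_centralizer [T2Space G] (μ : Measure G) [μ.IsMulLeftInvariant]
    [IsProbabilityMeasure μ] {x : G} {n : ℕ} (hfin : (conjugatesOf x).Finite)
    (hcard : (conjugatesOf x).ncard ≤ n) : (n : ℝ≥0∞)⁻¹ ≤ μ (Subgroup.centralizer {x}) :=
  have := finiteIndex_centralizer_singleton hfin
  (Subgroup.centralizer {x}).inv_le_measure_of_index_le μ
    (Set.isClosed_centralizer _).measurableSet (by rwa [index_centralizer_singleton])

theorem inv_le_measure_topologicalClosure_zpowers_pow_subgroupOf {g : G} {l : ℕ} (hl : 0 < l)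
    {H : Subgroup G} (hgH : g ∈ H) (hH : H ≤ (zpowers g).topologicalClosure)
    (ν : Measure H) [ν.IsMulLeftInvariant] [IsProbabilityMeasure ν] :
    (l : ℝ≥0∞)⁻¹ ≤ ν ((zpowers (g ^ l)).topologicalClosure.subgroupOf H) := by
  have hcover : ⋃ i ∈ Finset.range l, (⟨g, hgH⟩ ^ i : H) •
      ((zpowers (g ^ l)).topologicalClosure.subgroupOf H : Set H) = Set.univ := by
    refine Set.eq_univ_of_forall fun z => ?_
    have hz := topologicalClosure_zpowers_subset_iUnion_pow_smul g hl (hH z.2)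
    simp only [Set.mem_iUnion, mem_leftCoset_iff] at hz ⊢
    obtain ⟨i, hi, hzi⟩ := hz
    exact ⟨i, hi, mem_subgroupOf.mpr hzi⟩
  have := finiteIndex_of_leftCoset_cover_const hcover
  refine inv_le_measure_of_index_le ν _ ?_ ?_
  · rw [coe_subgroupOf]
    exact ((zpowers (g ^ l)).isClosed_topologicalClosure.preimage
      continuous_subtype_val).measurableSet
  · simpa using index_le_of_leftCoset_cover_const hcover

end Haar

theorem stmt19_general {G : Type*} [Group G] [TopologicalSpace G] [IsTopologicalGroup G]
    [T2Space G] [MeasurableSpace G] [BorelSpace G]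
    (μ : Measure G) [μ.IsHaarMeasure] [IsProbabilityMeasure μ]
    (l n : ℕ) (hl : 0 < l)
    (K : Subgroup G)
    (h : ∀ x ∈ K, {y : G | ∃ g : G, g⁻¹ * x ^ l * g = y}.Finite ∧
      {y : G | ∃ g : G, g⁻¹ * x ^ l * g = y}.ncard ≤ n) :
    ∀ g ∈ K, ∀ (ν : Measure ((Subgroup.zpowers g).topologicalClosure)),
      ν.IsHaarMeasure → IsProbabilityMeasure ν →
      (((l * n : ℕ) : ℝ≥0∞))⁻¹ ≤
        haarCommProb ((Subgroup.zpowers g).topologicalClosure) ν μ := by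
  intro g hg ν _ _
  obtain ⟨hfin, hcard⟩ := h g hg
  rw [← conjugatesOf_eq_setOf_inv_mul_mul] at hfin hcard
  have hcomm : ∀ a ∈ ((zpowers (g ^ l)).topologicalClosure.subgroupOf
      (zpowers g).topologicalClosure : Set (zpowers g).topologicalClosure),
      ∀ c ∈ (Subgroup.centralizer {g ^ l} : Set G), (a : G) * c = c * a := fun _ ha _ hc =>
    (Commute.symm (mem_centralizer_singleton_iff.mp hc)).of_mem_topologicalClosure_zpowers
      (mem_subgroupOf.mp ha)
  calc (((l * n : ℕ) : ℝ≥0∞))⁻¹ = (l : ℝ≥0∞)⁻¹ * (n : ℝ≥0∞)⁻¹ := by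
        rw [Nat.cast_mul, ENNReal.mul_inv (.inr (ENNReal.natCast_ne_top n))
          (.inl (ENNReal.natCast_ne_top l))]
    _ ≤ _ := mul_le_mul' (inv_le_measure_topologicalClosure_zpowers_pow_subgroupOf hl
        (le_topologicalClosure _ (mem_zpowers g)) le_rfl ν)
        (inv_le_measure_centralizer μ hfin hcard)
    _ ≤ _ := mul_measure_le_haarCommProb ν μ hcomm

theorem stmt19 {G : Type*} [Group G] [TopologicalSpace G] [IsTopologicalGroup G]
    [CompactSpace G] [T2Space G] [MeasurableSpace G] [BorelSpace G]
    (μ : Measure G) [μ.IsHaarMeasure] [IsProbabilityMeasure μ]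
    (l n : ℕ) (hl : 0 < l) (hn : 0 < n)
    (K : Subgroup G) (hKc : IsClosed (K : Set G))
    (h : ∀ x ∈ K, {y : G | ∃ g : G, g⁻¹ * x ^ l * g = y}.Finite ∧
      {y : G | ∃ g : G, g⁻¹ * x ^ l * g = y}.ncard ≤ n) :
    ∀ g ∈ K, ∀ (ν : Measure ((Subgroup.zpowers g).topologicalClosure)),
      ν.IsHaarMeasure → IsProbabilityMeasure ν →
      (((l * n : ℕ) : ℝ≥0∞))⁻¹ ≤
        haarCommProb ((Subgroup.zpowers g).topologicalClosure) ν μ :=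
  stmt19_general μ l n hl K h
end
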